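/- arXiv:2403.19134 — 2 statements merged into one kernel-verified Lean document; each statement's English description precedes it below -/
import Mathlib

section
/- Suppose k < 1 < d₁, and suppose there exist ε > 0, λ < −1 and a continuous function φ:[−h₀−ε, h₀+ε]→ℝ with φ > 0 satisfying d₁(∫_{−h₀−ε}^{h₀+ε} J₁(x−y)φ(y)dy − φ(x)) = λφ(x) for all x ∈ [−h₀−ε, h₀+ε] (i.e., 2h₀ + 2ε < l₁). Then, with the other constants and initial data fixed, there exists μ₀ > 0 such that for every μ ∈ (0,μ₀], every solution (u,v,g,h) of system (1.2) with parameter μ satisfies [g(t),h(t)] ⊆ [−h₀−ε, h₀+ε] for all t ≥ 0; in particular h_∞ − g_∞ ≤ 2h₀ + 2ε < ∞. -/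
/-!
Up to the first time the free boundary leaves `[-h₀-ε, h₀+ε]`, the reaction term satisfies
`u (1 - u - k v) ≤ u`, so `M e^{(λ+1)t} φ` is a supersolution of the `u`-equation there, and
a maximum-principle argument gives `u ≤ M e^{(λ+1)t} φ`, with `M` fixed by `u₀ ≤ M φ`.
Since `λ + 1 < 0`, the boundary speeds are then bounded by `μ C e^{(λ+1)t}` with `C` independent
of `μ`, and its integral over `[0, ∞)` is `μ C / -(λ+1)`. For small `μ` this is at most `ε / 2`,
so the boundary can never reach `±(h₀+ε)`.
-/

open MeasureTheory Filter Topology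

/-- Assumption (J) on a kernel function: continuous, bounded, even, nonnegative,
positive at 0, total integral 1. -/
def IsKernel (J : ℝ → ℝ) : Prop :=
  Continuous J ∧ (∃ C, ∀ x, J x ≤ C) ∧ (∀ x, J (-x) = J x) ∧
    (∀ x, 0 ≤ J x) ∧ 0 < J 0 ∧ (∫ x, J x) = 1

/-- Admissible initial data for system (1.2). -/
def AdmissibleInit (h₀ : ℝ) (u₀ v₀ : ℝ → ℝ) : Prop :=
  0 < h₀ ∧ Continuous u₀ ∧ (∀ x : ℝ, h₀ ≤ |x| → u₀ x = 0) ∧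
    (∀ x : ℝ, |x| < h₀ → 0 < u₀ x) ∧
    Continuous v₀ ∧ (∃ C, ∀ x, v₀ x ≤ C) ∧ (∀ x, 0 ≤ v₀ x) ∧ (∃ x, v₀ x ≠ 0)

/-- A solution `(u, v, g, h)` of the free boundary system (1.2), with parameters
`d₁, d₂, hc, k, γ, μ`, kernels `J₁, J₂` and initial data `(u₀, v₀, h₀)`.
(The interspecific competition constant called `h` in the paper is named `hc` here,
since `h` denotes the right free boundary.) -/
structure IsSolution (d₁ d₂ hc k γ μ h₀ : ℝ) (J₁ J₂ u₀ v₀ : ℝ → ℝ)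
    (u v : ℝ → ℝ → ℝ) (g h : ℝ → ℝ) : Prop where
  u_nonneg : ∀ t x, 0 ≤ u t x
  v_nonneg : ∀ t x, 0 ≤ v t x
  u_bdd : ∃ C, ∀ t x, u t x ≤ C
  v_bdd : ∃ C, ∀ t x, v t x ≤ C
  u_cont : Continuous fun p : ℝ × ℝ => u p.1 p.2
  v_cont : Continuous fun p : ℝ × ℝ => v p.1 p.2
  g_cont : Continuous g
  h_cont : Continuous h
  g_anti : AntitoneOn g (Set.Ici 0)
  h_mono : MonotoneOn h (Set.Ici 0)
  gh_lt : ∀ t ≥ 0, g t < h t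
  u_eq : ∀ t > 0, ∀ x, g t < x → x < h t →
    HasDerivAt (fun s => u s x)
      (d₁ * ((∫ y in g t..h t, J₁ (x - y) * u t y) - u t x)
        + u t x * (1 - u t x - k * v t x)) t
  v_eq : ∀ t > 0, ∀ x : ℝ,
    HasDerivAt (fun s => v s x)
      (d₂ * ((∫ y, J₂ (x - y) * v t y) - v t x)
        + γ * v t x * (1 - v t x - hc * u t x)) t
  u_outside : ∀ t ≥ 0, ∀ x : ℝ, x ∉ Set.Ioo (g t) (h t) → u t x = 0
  h_eq : ∀ t > 0,
    HasDerivAt h (μ * ∫ x in g t..h t, (∫ y in Set.Ioi (h t), J₁ (x - y)) * u t x) t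
  g_eq : ∀ t > 0,
    HasDerivAt g (-μ * ∫ x in g t..h t, (∫ y in Set.Iio (g t), J₁ (x - y)) * u t x) t
  h_init : h 0 = h₀
  g_init : g 0 = -h₀
  u_init : ∀ x, u 0 x = u₀ x
  v_init : ∀ x, v 0 x = v₀ x

open Set Real

theorem HasDerivAt.nonneg_of_isMaxOn_Icc {f : ℝ → ℝ} {f' a b : ℝ} (hab : a < b)
    (hf : HasDerivAt f f' b) (hmax : IsMaxOn f (Icc a b) b) : 0 ≤ f' := by
  have hcone : a - b ∈ posTangentConeAt (Icc a b) b :=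
    sub_mem_posTangentConeAt_of_segment_subset
      ((convex_Icc a b).segment_subset (right_mem_Icc.2 hab.le) (left_mem_Icc.2 hab.le))
  have := hmax.localize.hasFDerivWithinAt_nonpos hf.hasDerivWithinAt hcone
  simp only [ContinuousLinearMap.toSpanSingleton_apply, smul_eq_mul] at this
  exact nonneg_of_mul_nonpos_right this (sub_neg.2 hab)

theorem sub_le_div_of_hasDerivAt_le_mul_exp {f f' : ℝ → ℝ} {C σ T : ℝ} (hC : 0 ≤ C)
    (hσ : σ < 0) (hT : 0 ≤ T) (hf : ContinuousOn f (Icc 0 T))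
    (hf' : ∀ t ∈ Ioo 0 T, HasDerivAt f (f' t) t)
    (hbound : ∀ t ∈ Ioo 0 T, f' t ≤ C * exp (σ * t)) :
    f T - f 0 ≤ C / -σ := by
  have hexp (t : ℝ) : HasDerivAt (fun s => C / σ * (exp (σ * s) - 1)) (C * exp (σ * t)) t := by
    refine ((((hasDerivAt_id' t).const_mul σ).exp.sub_const 1).const_mul (C / σ)).congr_deriv ?_
    field_simp [hσ.ne]
  have hψ : AntitoneOn (fun t => f t - C / σ * (exp (σ * t) - 1)) (Icc 0 T) := by
    refine antitoneOn_of_hasDerivWithinAt_nonpos (convex_Icc 0 T)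
      (hf.sub (by fun_prop)) (f' := fun t => f' t - C * exp (σ * t)) ?_ ?_ <;>
      intro t ht <;> rw [interior_Icc] at ht
    · exact ((hf' t ht).sub (hexp t)).hasDerivWithinAt
    · linarith [hbound t ht]
  have hTle := hψ (left_mem_Icc.2 hT) (right_mem_Icc.2 hT) hT
  simp only [mul_zero, exp_zero, sub_self, sub_zero] at hTle
  have hdecay : C / σ * (exp (σ * T) - 1) ≤ C / -σ := by
    rw [show C / σ * (exp (σ * T) - 1) = C * (1 - exp (σ * T)) / -σ by field_simp; ring]
    gcongr
    · linarith
    · nlinarith [exp_pos (σ * T)]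
  linarith

theorem Ici_subset_of_forall_Icc_subset {U F : Set ℝ} {a : ℝ} (hU : IsOpen U) (hF : IsClosed F)
    (hUF : U ⊆ F) (ha : a ∈ U) (hstep : ∀ T, a ≤ T → Icc a T ⊆ F → T ∈ U) : Ici a ⊆ U := by
  intro t ht
  by_contra htU
  have hbdd : BddBelow (Ici a \ U) := ⟨a, fun s hs => hs.1⟩
  have hT := (isClosed_Ici.sdiff hU).csInf_mem ⟨t, ht, htU⟩ hbdd
  set T := sInf (Ici a \ U)
  have hbelow : Ico a T ⊆ U := fun s hs => by
    by_contra hsU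
    exact (csInf_le hbdd ⟨hs.1, hsU⟩).not_gt hs.2
  refine hT.2 (hstep T hT.1 ?_)
  rcases (mem_Ici.1 hT.1).eq_or_lt with hTa | hlt
  · rw [← hTa, Icc_self, singleton_subset_iff]
    exact hUF ha
  · rw [← closure_Ico hlt.ne]
    exact closure_minimal (hbelow.trans hUF) hF

theorem IsCompact.setOf_snd_mem_Icc {s : Set ℝ} {g h : ℝ → ℝ} {a b : ℝ} (hs : IsCompact s)
    (hg : Continuous g) (hh : Continuous h) (hsub : ∀ t ∈ s, Icc (g t) (h t) ⊆ Icc a b) :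
    IsCompact {p : ℝ × ℝ | p.1 ∈ s ∧ p.2 ∈ Icc (g p.1) (h p.1)} := by
  refine (hs.prod isCompact_Icc).of_isClosed_subset ?_ fun p hp => ⟨hp.1, hsub _ hp.1 hp.2⟩
  exact (hs.isClosed.preimage continuous_fst).inter
    ((isClosed_le (hg.comp continuous_fst) continuous_snd).inter
      (isClosed_le continuous_snd (hh.comp continuous_fst)))

theorem exists_pos_le_mul_of_continuousOn {α : Type*} [TopologicalSpace α] {s : Set α}
    {f φ : α → ℝ} (hs : IsCompact s) (hf : ContinuousOn f s) (hφ : ContinuousOn φ s)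
    (hφpos : ∀ x ∈ s, 0 < φ x) : ∃ M > 0, ∀ x ∈ s, f x ≤ M * φ x := by
  obtain ⟨C, hC⟩ := hs.bddAbove_image (hf.div hφ fun x hx => (hφpos x hx).ne')
  refine ⟨max C 1, by positivity, fun x hx => ?_⟩
  have hle : f x / φ x ≤ max C 1 := (hC (mem_image_of_mem _ hx)).trans (le_max_left _ _)
  rwa [div_le_iff₀ (hφpos x hx)] at hle

namespace IsKernel

variable {J : ℝ → ℝ}

theorem integrable (hJ : IsKernel J) : Integrable J := by
  obtain ⟨-, -, -, -, -, hJ1⟩ := hJ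
  by_contra hJi
  rw [integral_undef hJi] at hJ1
  exact zero_ne_one hJ1

theorem setIntegral_comp_sub_le_one (hJ : IsKernel J) (S : Set ℝ) (x : ℝ) :
    ∫ y in S, J (x - y) ≤ 1 := by
  have hJi := hJ.integrable
  obtain ⟨-, -, -, hJ0, -, hJ1⟩ := hJ
  calc ∫ y in S, J (x - y) ≤ ∫ y, J (x - y) :=
        setIntegral_le_integral (hJi.comp_sub_left x)
          (Eventually.of_forall fun y => hJ0 _)
    _ = 1 := by rw [integral_sub_left_eq_self J volume x, hJ1]

theorem intervalIntegral_flux_le (hJ : IsKernel J) (S : Set ℝ) {u : ℝ → ℝ} {a b C : ℝ}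
    (hab : a ≤ b) (hu : ∀ x ∈ Icc a b, 0 ≤ u x ∧ u x ≤ C) :
    ∫ x in a..b, (∫ y in S, J (x - y)) * u x ≤ C * (b - a) := by
  have hle1 := hJ.setIntegral_comp_sub_le_one S
  obtain ⟨-, -, -, hJ0, -⟩ := hJ
  have hnorm : ∀ x ∈ uIoc a b, ‖(∫ y in S, J (x - y)) * u x‖ ≤ C := fun x hx => by
    rw [uIoc_of_le hab] at hx
    obtain ⟨hu0, huC⟩ := hu x (Ioc_subset_Icc_self hx)
    have hk0 : 0 ≤ ∫ y in S, J (x - y) := integral_nonneg fun y => hJ0 _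
    rw [Real.norm_eq_abs, abs_of_nonneg (mul_nonneg hk0 hu0)]
    nlinarith [hle1 x]
  calc _ ≤ ‖∫ x in a..b, (∫ y in S, J (x - y)) * u x‖ := le_norm_self _
    _ ≤ C * |b - a| := intervalIntegral.norm_integral_le_of_norm_le_const hnorm
    _ = C * (b - a) := by rw [abs_of_nonneg (sub_nonneg.2 hab)]

theorem intervalIntegral_mul_le_add (hJ : IsKernel J) {u φ : ℝ → ℝ} {a b c d x Z : ℝ}
    (hac : a ≤ c) (hcd : c ≤ d) (hdb : d ≤ b) (hu : ContinuousOn u (Icc c d))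
    (hφ : ContinuousOn φ (Icc a b)) (hφ0 : ∀ y ∈ Icc a b, 0 ≤ φ y) (hZ : 0 ≤ Z)
    (huφ : ∀ y ∈ Icc c d, u y ≤ φ y + Z) :
    ∫ y in c..d, J (x - y) * u y ≤ (∫ y in a..b, J (x - y) * φ y) + Z := by
  have hab : a ≤ b := (hac.trans hcd).trans hdb
  have hJ1 : ∫ y in a..b, J (x - y) ≤ 1 := by
    rw [intervalIntegral.integral_of_le hab]
    exact hJ.setIntegral_comp_sub_le_one _ x
  obtain ⟨hJc, -, -, hJ0, -⟩ := hJ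
  have hJx : Continuous fun y => J (x - y) := hJc.comp (continuous_sub_left x)
  have hφi : IntervalIntegrable (fun y => J (x - y) * φ y) volume a b :=
    (hJx.continuousOn.mul hφ).intervalIntegrable_of_Icc hab
  have hJi : IntervalIntegrable (fun y => J (x - y)) volume a b := hJx.intervalIntegrable a b
  calc ∫ y in c..d, J (x - y) * u y ≤ ∫ y in c..d, J (x - y) * (φ y + Z) :=
        intervalIntegral.integral_mono_on hcd
          ((hJx.continuousOn.mul hu).intervalIntegrable_of_Icc hcd)
          ((hJx.continuousOn.mul ((hφ.mono (Icc_subset_Icc hac hdb)).add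
            continuousOn_const)).intervalIntegrable_of_Icc hcd)
          fun y hy => mul_le_mul_of_nonneg_left (huφ y hy) (hJ0 _)
    _ ≤ ∫ y in a..b, J (x - y) * (φ y + Z) :=
        intervalIntegral.integral_mono_interval hac hcd hdb
          (ae_restrict_of_forall_mem measurableSet_Ioc fun y hy =>
            mul_nonneg (hJ0 _) (add_nonneg (hφ0 y (Ioc_subset_Icc_self hy)) hZ))
          (by simpa only [mul_add] using hφi.add (hJi.mul_const Z))
    _ = (∫ y in a..b, J (x - y) * φ y) + (∫ y in a..b, J (x - y)) * Z := by
        simp only [mul_add]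
        rw [intervalIntegral.integral_add hφi (hJi.mul_const Z),
          intervalIntegral.integral_mul_const]
    _ ≤ (∫ y in a..b, J (x - y) * φ y) + Z :=
        add_le_add_right (mul_le_of_le_one_left hZ hJ1) _

end IsKernel

-- The weight `exp (-2 t)` makes the time derivative at a positive maximum strictly negative.
noncomputable def excess (u : ℝ → ℝ → ℝ) (M σ : ℝ) (φ : ℝ → ℝ) (p : ℝ × ℝ) : ℝ :=
  (u p.1 p.2 - M * exp (σ * p.1) * φ p.2) * exp (-2 * p.1)

namespace IsSolution

variable {d₁ d₂ hc k γ μ h₀ : ℝ} {J₁ J₂ u₀ v₀ : ℝ → ℝ} {u v : ℝ → ℝ → ℝ} {g h : ℝ → ℝ}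

theorem mem_Ioo_of_pos (sol : IsSolution d₁ d₂ hc k γ μ h₀ J₁ J₂ u₀ v₀ u v g h) {t x : ℝ}
    (ht : 0 ≤ t) (hu : 0 < u t x) : x ∈ Ioo (g t) (h t) := by
  by_contra hx
  exact hu.ne' (sol.u_outside t ht x hx)

theorem exists_hasDerivAt_u_le_of_touch
    (sol : IsSolution d₁ d₂ hc k γ μ h₀ J₁ J₂ u₀ v₀ u v g h) (hJ : IsKernel J₁) (hd₁ : 0 ≤ d₁)
    (hk : 0 ≤ k) {a b lam : ℝ} {φ : ℝ → ℝ} (hφcont : ContinuousOn φ (Icc a b))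
    (hφ0 : ∀ x ∈ Icc a b, 0 ≤ φ x)
    (hφeq : ∀ x ∈ Icc a b, d₁ * ((∫ y in a..b, J₁ (x - y) * φ y) - φ x) = lam * φ x)
    {t x c Z : ℝ} (ht : 0 < t) (hx : x ∈ Ioo (g t) (h t)) (hsub : Icc (g t) (h t) ⊆ Icc a b)
    (hc : 0 ≤ c) (hZ : 0 ≤ Z) (hle : ∀ y ∈ Icc (g t) (h t), u t y ≤ c * φ y + Z)
    (heq : u t x = c * φ x + Z) :
    ∃ D, HasDerivAt (fun s => u s x) D t ∧ D ≤ (lam + 1) * (c * φ x) + Z := by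
  refine ⟨_, sol.u_eq t ht x hx.1 hx.2, ?_⟩
  have hgh : g t ≤ h t := (sol.gh_lt t ht.le).le
  have hnonlocal : ∫ y in g t..h t, J₁ (x - y) * u t y
      ≤ c * (∫ y in a..b, J₁ (x - y) * φ y) + Z := by
    have := hJ.intervalIntegral_mul_le_add (x := x) (u := u t) (φ := fun y => c * φ y)
      (hsub (left_mem_Icc.2 hgh)).1 hgh (hsub (right_mem_Icc.2 hgh)).2
      (sol.u_cont.comp (Continuous.prodMk_right t)).continuousOn
      (continuousOn_const.mul hφcont) (fun y hy => mul_nonneg hc (hφ0 y hy)) hZ hle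
    simpa only [mul_left_comm, intervalIntegral.integral_const_mul] using this
  have heig := congrArg (c * ·) (hφeq x (hsub (Ioo_subset_Icc_self hx)))
  have hreact : u t x * (1 - u t x - k * v t x) ≤ u t x := by
    have hu := sol.u_nonneg t x
    nlinarith [mul_nonneg hu (mul_nonneg hk (sol.v_nonneg t x))]
  nlinarith [mul_le_mul_of_nonneg_left hnonlocal hd₁]

theorem excess_nonpos_of_isMaxOn (sol : IsSolution d₁ d₂ hc k γ μ h₀ J₁ J₂ u₀ v₀ u v g h)
    (hJ : IsKernel J₁) (hd₁ : 0 ≤ d₁) (hk : 0 ≤ k) {a b lam : ℝ} {φ : ℝ → ℝ}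
    (hφcont : ContinuousOn φ (Icc a b)) (hφ0 : ∀ x ∈ Icc a b, 0 ≤ φ x)
    (hφeq : ∀ x ∈ Icc a b, d₁ * ((∫ y in a..b, J₁ (x - y) * φ y) - φ x) = lam * φ x)
    {M T t₀ x₀ : ℝ} (hM : 0 ≤ M) (hu₀ : ∀ x ∈ Icc a b, u₀ x ≤ M * φ x)
    (hT : ∀ t ∈ Icc 0 T, Icc (g t) (h t) ⊆ Icc a b) (ht₀ : t₀ ∈ Icc 0 T)
    (hx₀ : x₀ ∈ Icc (g t₀) (h t₀))
    (hmax : IsMaxOn (excess u M (lam + 1) φ)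
      {p : ℝ × ℝ | p.1 ∈ Icc 0 T ∧ p.2 ∈ Icc (g p.1) (h p.1)} (t₀, x₀)) :
    excess u M (lam + 1) φ (t₀, x₀) ≤ 0 := by
  by_contra! hpos
  set w : ℝ → ℝ → ℝ := fun t x => M * exp ((lam + 1) * t) * φ x with hw
  have hw0 : ∀ t, ∀ x ∈ Icc a b, 0 ≤ w t x := fun t x hx =>
    mul_nonneg (mul_nonneg hM (exp_pos _).le) (hφ0 x hx)
  set Z := u t₀ x₀ - w t₀ x₀ with hZ
  have hZpos : 0 < Z := pos_of_mul_pos_left hpos (exp_pos _).le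
  have hu_pos : 0 < u t₀ x₀ := by linarith [hw0 t₀ x₀ (hT t₀ ht₀ hx₀)]
  have ht₀pos : 0 < t₀ := by
    refine ht₀.1.lt_of_ne fun h0 => hZpos.not_ge ?_
    subst h0
    simp only [hZ, hw, sol.u_init, mul_zero, exp_zero, mul_one, sub_nonpos]
    exact hu₀ x₀ (hT 0 ht₀ hx₀)
  have hle : ∀ y ∈ Icc (g t₀) (h t₀), u t₀ y ≤ M * exp ((lam + 1) * t₀) * φ y + Z := by
    intro y hy
    have h₁ : excess u M (lam + 1) φ (t₀, y) ≤ excess u M (lam + 1) φ (t₀, x₀) :=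
      hmax ⟨ht₀, hy⟩
    have h₂ := (mul_le_mul_iff_of_pos_right (exp_pos (-2 * t₀))).1 h₁
    linarith
  obtain ⟨D, hD, hDle⟩ := sol.exists_hasDerivAt_u_le_of_touch hJ hd₁ hk hφcont hφ0 hφeq ht₀pos
    (sol.mem_Ioo_of_pos ht₀.1 hu_pos) (hT t₀ ht₀) (mul_nonneg hM (exp_pos _).le) hZpos.le hle
    (by rw [hZ]; ring)
  have hderiv : HasDerivAt (fun s => excess u M (lam + 1) φ (s, x₀))
      ((D - (lam + 1) * w t₀ x₀ - 2 * Z) * exp (-2 * t₀)) t₀ := by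
    refine ((hD.sub ((((hasDerivAt_id' t₀).const_mul (lam + 1)).exp.const_mul M).mul_const
      (φ x₀))).mul ((hasDerivAt_id' t₀).const_mul (-2)).exp).congr_deriv ?_
    simp only [hw, hZ, Pi.sub_apply]
    ring
  have hmax_time : IsMaxOn (fun s => excess u M (lam + 1) φ (s, x₀)) (Icc 0 t₀) t₀ := by
    intro s hs
    by_cases hxs : x₀ ∈ Icc (g s) (h s)
    · exact hmax ⟨⟨hs.1, hs.2.trans ht₀.2⟩, hxs⟩
    · have hu0 : u s x₀ = 0 :=
        sol.u_outside s hs.1 x₀ fun hx => hxs (Ioo_subset_Icc_self hx)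
      have : excess u M (lam + 1) φ (s, x₀) ≤ 0 := by
        simp only [excess, hu0, zero_sub, neg_mul]
        exact neg_nonpos.2 (mul_nonneg (hw0 s x₀ (hT t₀ ht₀ hx₀)) (exp_pos _).le)
      exact this.trans hpos.le
  have := hderiv.nonneg_of_isMaxOn_Icc ht₀pos hmax_time
  nlinarith [exp_pos (-2 * t₀)]

theorem u_le_mul_exp_mul (sol : IsSolution d₁ d₂ hc k γ μ h₀ J₁ J₂ u₀ v₀ u v g h)
    (hJ : IsKernel J₁) (hd₁ : 0 ≤ d₁) (hk : 0 ≤ k) {a b lam : ℝ} {φ : ℝ → ℝ}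
    (hφcont : ContinuousOn φ (Icc a b)) (hφ0 : ∀ x ∈ Icc a b, 0 ≤ φ x)
    (hφeq : ∀ x ∈ Icc a b, d₁ * ((∫ y in a..b, J₁ (x - y) * φ y) - φ x) = lam * φ x)
    {M T : ℝ} (hM : 0 ≤ M) (hu₀ : ∀ x ∈ Icc a b, u₀ x ≤ M * φ x)
    (hT : ∀ t ∈ Icc 0 T, Icc (g t) (h t) ⊆ Icc a b) :
    ∀ t ∈ Icc 0 T, ∀ x ∈ Icc (g t) (h t), u t x ≤ M * exp ((lam + 1) * t) * φ x := by
  intro t ht x hx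
  have hcont : ContinuousOn (excess u M (lam + 1) φ)
      {p : ℝ × ℝ | p.1 ∈ Icc 0 T ∧ p.2 ∈ Icc (g p.1) (h p.1)} := by
    refine ContinuousOn.mul (sol.u_cont.continuousOn.sub (ContinuousOn.mul (by fun_prop) ?_))
      (by fun_prop)
    exact hφcont.comp continuous_snd.continuousOn fun p hp => hT _ hp.1 hp.2
  obtain ⟨⟨t₀, x₀⟩, ⟨ht₀, hx₀⟩, hmax⟩ :=
    (isCompact_Icc.setOf_snd_mem_Icc sol.g_cont sol.h_cont hT).exists_isMaxOn
      ⟨(t, x), ht, hx⟩ hcont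
  have hexcess : excess u M (lam + 1) φ (t, x) ≤ 0 := (hmax ⟨ht, hx⟩).trans
    (sol.excess_nonpos_of_isMaxOn hJ hd₁ hk hφcont hφ0 hφeq hM hu₀ hT ht₀ hx₀ hmax)
  exact sub_nonpos.1 (nonpos_of_mul_nonpos_left hexcess (exp_pos _))

theorem boundary_displacement_le (sol : IsSolution d₁ d₂ hc k γ μ h₀ J₁ J₂ u₀ v₀ u v g h)
    (hJ : IsKernel J₁) (hd₁ : 0 ≤ d₁) (hk : 0 ≤ k) {a b lam : ℝ} {φ : ℝ → ℝ}
    (hφcont : ContinuousOn φ (Icc a b)) (hφ0 : ∀ x ∈ Icc a b, 0 ≤ φ x)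
    (hφeq : ∀ x ∈ Icc a b, d₁ * ((∫ y in a..b, J₁ (x - y) * φ y) - φ x) = lam * φ x)
    (hlam : lam < -1) {M Φ T : ℝ} (hM : 0 ≤ M) (hu₀ : ∀ x ∈ Icc a b, u₀ x ≤ M * φ x)
    (hΦ : ∀ x ∈ Icc a b, φ x ≤ Φ) (hμ : 0 ≤ μ) (hT0 : 0 ≤ T)
    (hT : ∀ t ∈ Icc 0 T, Icc (g t) (h t) ⊆ Icc a b) :
    h T - h₀ ≤ μ * (M * Φ * (b - a)) / -(lam + 1) ∧
      -h₀ - g T ≤ μ * (M * Φ * (b - a)) / -(lam + 1) := by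
  have hcomp := sol.u_le_mul_exp_mul hJ hd₁ hk hφcont hφ0 hφeq hM hu₀ hT
  have hwidth : ∀ t ∈ Icc 0 T, g t ≤ h t ∧ h t - g t ≤ b - a := fun t ht => by
    have hgh : g t ≤ h t := (sol.gh_lt t ht.1).le
    have hg := hT t ht (left_mem_Icc.2 hgh)
    have hh := hT t ht (right_mem_Icc.2 hgh)
    exact ⟨hgh, by linarith [hg.1, hh.2]⟩
  have h0T : (0 : ℝ) ∈ Icc 0 T := left_mem_Icc.2 hT0
  have hg₀ : g 0 ∈ Icc a b := hT 0 h0T (left_mem_Icc.2 (hwidth 0 h0T).1)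
  have hΦ0 : 0 ≤ Φ := (hφ0 _ hg₀).trans (hΦ _ hg₀)
  have hab : 0 ≤ b - a := sub_nonneg.2 (hg₀.1.trans hg₀.2)
  have hC : 0 ≤ μ * (M * Φ * (b - a)) := by positivity
  have hflux : ∀ t ∈ Ioo 0 T, ∀ S : Set ℝ,
      μ * ∫ x in g t..h t, (∫ y in S, J₁ (x - y)) * u t x
        ≤ μ * (M * Φ * (b - a)) * exp ((lam + 1) * t) := by
    intro t ht S
    have htT := Ioo_subset_Icc_self ht
    have hbound := hJ.intervalIntegral_flux_le S (hwidth t htT).1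
      (C := M * exp ((lam + 1) * t) * Φ) fun x hx => ⟨sol.u_nonneg t x, (hcomp t htT x hx).trans
        (mul_le_mul_of_nonneg_left (hΦ x (hT t htT hx)) (by positivity))⟩
    calc μ * ∫ x in g t..h t, (∫ y in S, J₁ (x - y)) * u t x
        ≤ μ * (M * exp ((lam + 1) * t) * Φ * (h t - g t)) :=
          mul_le_mul_of_nonneg_left hbound hμ
      _ ≤ μ * (M * exp ((lam + 1) * t) * Φ * (b - a)) :=
        mul_le_mul_of_nonneg_left (mul_le_mul_of_nonneg_left (hwidth t htT).2 (by positivity)) hμ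
      _ = μ * (M * Φ * (b - a)) * exp ((lam + 1) * t) := by ring
  have hσ : lam + 1 < 0 := by linarith
  constructor
  · have := sub_le_div_of_hasDerivAt_le_mul_exp hC hσ hT0 sol.h_cont.continuousOn
      (fun t ht => sol.h_eq t ht.1) (fun t ht => hflux t ht _)
    rwa [sol.h_init] at this
  · have := sub_le_div_of_hasDerivAt_le_mul_exp hC hσ hT0
      sol.g_cont.neg.continuousOn (fun t ht => (sol.g_eq t ht.1).neg)
      (fun t ht => by simpa only [neg_mul, neg_neg] using hflux t ht _)
    rw [Pi.neg_apply, Pi.neg_apply, sol.g_init] at this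
    linarith

end IsSolution

theorem vanishing_for_small_mu_weak_competition_general
    (d₁ d₂ hc k γ h₀ : ℝ) (J₁ J₂ u₀ v₀ : ℝ → ℝ)
    (hd₁ : 0 < d₁) (hkpos : 0 < k)
    (hJ₁ : IsKernel J₁)
    (hinit : AdmissibleInit h₀ u₀ v₀)
    (ε lam : ℝ) (φ : ℝ → ℝ)
    (hε : 0 < ε) (hlam : lam < -1)
    (hφcont : ContinuousOn φ (Set.Icc (-h₀ - ε) (h₀ + ε)))
    (hφpos : ∀ x ∈ Set.Icc (-h₀ - ε) (h₀ + ε), 0 < φ x)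
    (hφeq : ∀ x ∈ Set.Icc (-h₀ - ε) (h₀ + ε),
      d₁ * ((∫ y in (-h₀ - ε)..(h₀ + ε), J₁ (x - y) * φ y) - φ x) = lam * φ x) :
    ∃ μ₀ > 0, ∀ μ ∈ Set.Ioc 0 μ₀,
      ∀ (u v : ℝ → ℝ → ℝ) (g h : ℝ → ℝ),
        IsSolution d₁ d₂ hc k γ μ h₀ J₁ J₂ u₀ v₀ u v g h →
        (∀ t ≥ 0, Set.Icc (g t) (h t) ⊆ Set.Icc (-h₀ - ε) (h₀ + ε)) ∧
        (∀ t ≥ 0, h t - g t ≤ 2 * h₀ + 2 * ε) := by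
  obtain ⟨hh₀, hu₀, -⟩ := hinit
  obtain ⟨M, hM, hMφ⟩ :=
    exists_pos_le_mul_of_continuousOn isCompact_Icc hu₀.continuousOn hφcont hφpos
  obtain ⟨Φ, hΦ⟩ := isCompact_Icc.bddAbove_image hφcont
  replace hΦ : ∀ x ∈ Icc (-h₀ - ε) (h₀ + ε), φ x ≤ Φ := fun x hx => hΦ (mem_image_of_mem φ hx)
  have h0 : (0 : ℝ) ∈ Icc (-h₀ - ε) (h₀ + ε) := ⟨by linarith, by linarith⟩
  have hΦpos : 0 < Φ := (hφpos 0 h0).trans_le (hΦ 0 h0)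
  set B := M * Φ * (h₀ + ε - (-h₀ - ε))
  have hB : 0 < B := mul_pos (mul_pos hM hΦpos) (by linarith)
  refine ⟨-(lam + 1) * ε / (2 * B), div_pos (mul_pos (by linarith) hε) (by positivity),
    fun μ hμ u v g h sol => ?_⟩
  have hspread : μ * B / -(lam + 1) ≤ ε / 2 := by
    have := hμ.2
    rw [le_div_iff₀ (by positivity)] at this
    rw [div_le_iff₀ (by linarith)]
    linarith
  have hinside : Ici 0 ⊆ {t | -h₀ - ε < g t ∧ h t < h₀ + ε} := by
    refine Ici_subset_of_forall_Icc_subset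
      ((isOpen_lt continuous_const sol.g_cont).inter (isOpen_lt sol.h_cont continuous_const))
      ((isClosed_le continuous_const sol.g_cont).inter (isClosed_le sol.h_cont continuous_const))
      (fun t ht => ⟨ht.1.le, ht.2.le⟩) ?_ fun T hT hTF => ?_
    · exact ⟨by linarith [sol.g_init], by linarith [sol.h_init]⟩
    · obtain ⟨hhT, hgT⟩ := sol.boundary_displacement_le hJ₁ hd₁.le hkpos.le hφcont
        (fun x hx => (hφpos x hx).le) hφeq hlam hM.le hMφ hΦ hμ.1.le hT
        fun t ht => Icc_subset_Icc (hTF ht).1 (hTF ht).2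
      constructor <;> linarith
  refine ⟨fun t ht => Icc_subset_Icc (hinside ht).1.le (hinside ht).2.le, fun t ht => ?_⟩
  obtain ⟨hgt, hht⟩ := hinside (mem_Ici.2 ht)
  linarith

/-- Lemma 4.3 (iii). Suppose `k < 1 < d₁` and the principal eigenvalue
of the nonlocal operator on `(-h₀-ε, h₀+ε)` is less than `-1` (witnessed by an eigenpair
`(lam, φ)` with `lam < -1` and `φ` continuous and positive on `[-h₀-ε, h₀+ε]`). Then
there is `μ₀ > 0` such that for every `μ ∈ (0, μ₀]`, every solution of (1.2) with
parameter `μ` satisfies `[g(t), h(t)] ⊆ [-h₀-ε, h₀+ε]` for all `t ≥ 0`; in particular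
`h(t) - g(t) ≤ 2h₀ + 2ε` for all `t ≥ 0`. -/
theorem vanishing_for_small_mu_weak_competition
    (d₁ d₂ hc k γ h₀ : ℝ) (J₁ J₂ u₀ v₀ : ℝ → ℝ)
    (hd₁ : 0 < d₁) (hd₂ : 0 < d₂) (hhc : 0 < hc) (hkpos : 0 < k) (hγ : 0 < γ)
    (hJ₁ : IsKernel J₁) (hJ₂ : IsKernel J₂)
    (hinit : AdmissibleInit h₀ u₀ v₀)
    (hk : k < 1) (hd : 1 < d₁)
    (ε lam : ℝ) (φ : ℝ → ℝ)
    (hε : 0 < ε) (hlam : lam < -1)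
    (hφcont : ContinuousOn φ (Set.Icc (-h₀ - ε) (h₀ + ε)))
    (hφpos : ∀ x ∈ Set.Icc (-h₀ - ε) (h₀ + ε), 0 < φ x)
    (hφeq : ∀ x ∈ Set.Icc (-h₀ - ε) (h₀ + ε),
      d₁ * ((∫ y in (-h₀ - ε)..(h₀ + ε), J₁ (x - y) * φ y) - φ x) = lam * φ x) :
    ∃ μ₀ > 0, ∀ μ ∈ Set.Ioc 0 μ₀,
      ∀ (u v : ℝ → ℝ → ℝ) (g h : ℝ → ℝ),
        IsSolution d₁ d₂ hc k γ μ h₀ J₁ J₂ u₀ v₀ u v g h →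
        (∀ t ≥ 0, Set.Icc (g t) (h t) ⊆ Set.Icc (-h₀ - ε) (h₀ + ε)) ∧
        (∀ t ≥ 0, h t - g t ≤ 2 * h₀ + 2 * ε) :=
  vanishing_for_small_mu_weak_competition_general d₁ d₂ hc k γ h₀ J₁ J₂ u₀ v₀ hd₁ hkpos hJ₁ hinit ε
    lam φ hε hlam hφcont hφpos hφeq
end

section
/- (Comparison with the Cauchy problem.) Let (u,v,g,h) be a solution of system (1.2) and let T > 0. Suppose ū, v̲ : [0,T]×ℝ → ℝ are nonnegative, bounded, continuous and differentiable in t, and satisfy ū_t(t,x) ≥ d₁∫_ℝ J₁(x−y)ū(t,y)dy − d₁ū(t,x) + ū(t,x)(1 − ū(t,x) − k v̲(t,x)) and v̲_t(t,x) ≤ d₂∫_ℝ J₂(x−y)v̲(t,y)dy − d₂v̲(t,x) + γ v̲(t,x)(1 − v̲(t,x) − h ū(t,x)) for all (t,x) ∈ (0,T]×ℝ, with ū(0,x) ≥ u₀(x) and 0 ≤ v̲(0,x) ≤ v₀(x) for all x ∈ ℝ. Then u(t,x) ≤ ū(t,x) and v(t,x) ≥ v̲(t,x) for all t ∈ [0,T]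 and x ∈ ℝ. -/
open MeasureTheory Filter Topology

/-!
Put `w = u - ū` and `w' = v̲ - v`. Where `u > ū ≥ 0` we are inside `(g, h)`, so `u` obeys its
equation there and the interval integral is the full convolution. Since the kernels have mass one
and the competition terms have the right sign, wherever `w` or `w'` is positive its time derivative
is at most `K c` for every common upper bound `c` of `w, w'` at that time. For such a family,
vanishing at `t = 0`, a bound `c e^{Lt}` with `L = 2K + 1` improves to `(c / 2) e^{Lt}` (the
exponential wins at a first touching point), and iterating from a uniform bound gives `w, w' ≤ 0`.
-/

open Set

theorem image_le_of_hasDerivAt_lt_deriv_boundary {f B B' : ℝ → ℝ} {a b : ℝ}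
    (hf : ContinuousOn f (Icc a b)) (ha : f a ≤ B a) (hB : ∀ x, HasDerivAt B (B' x) x)
    (bound : ∀ x ∈ Ico a b, f x = B x → ∃ D, HasDerivAt f D x ∧ D < B' x) :
    ∀ ⦃x⦄, x ∈ Icc a b → f x ≤ B x := by
  have hBc : ContinuousOn B (Icc a b) := fun x _ => (hB x).continuousAt.continuousWithinAt
  have hclosed : IsClosed ({x | f x ≤ B x} ∩ Icc a b) := by
    rw [inter_comm]
    exact (hf.prodMk hBc).preimage_isClosed_of_isClosed isClosed_Icc
      OrderClosedTopology.isClosed_le'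
  refine hclosed.Icc_subset_of_forall_mem_nhdsWithin ha ?_
  rintro x ⟨hxB, hx⟩
  rcases (show f x ≤ B x from hxB).lt_or_eq with hlt | heq
  · have : ∀ᶠ y in 𝓝[Icc a b] x, f y < B y :=
      (hf.prodMk hBc) x (Ico_subset_Icc_self hx)
        (isOpen_lt continuous_fst continuous_snd |>.mem_nhds hlt)
    filter_upwards [nhdsWithin_le_of_mem (Icc_mem_nhdsGT_of_mem hx) this] with y hy
    exact hy.le
  · obtain ⟨D, hD, hDB⟩ := bound x hx heq
    -- `B - f` vanishes at `x` with positive derivative, so it is positive just right of `x`.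
    have hslope := (hasDerivAt_iff_tendsto_slope.mp ((hB x).sub hD)).mono_left
      (nhdsGT_le_nhdsNE x)
    filter_upwards [hslope.eventually (eventually_gt_nhds (sub_pos.2 hDB)),
      self_mem_nhdsWithin] with y hy hxy
    have := pos_of_slope_pos hxy hy (by simp [heq])
    simp only [Pi.sub_apply, sub_pos] at this
    exact this.le

theorem nonpos_of_hasDerivAt_le_mul_upperBound {ι : Type*} {w : ι → ℝ → ℝ} {a b K M : ℝ}
    (hw : ∀ i, ContinuousOn (w i) (Icc a b)) (ha : ∀ i, w i a ≤ 0)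
    (hM : ∀ i, ∀ t ∈ Icc a b, w i t ≤ M)
    (hderiv : ∀ i, ∀ t ∈ Ioc a b, 0 < w i t → ∀ c, (∀ j, w j t ≤ c) →
      ∃ D, HasDerivAt (w i) D t ∧ D ≤ K * c) :
    ∀ i, ∀ t ∈ Icc a b, w i t ≤ 0 := by
  set L := 2 * max K 0 + 1
  have hL0 : 0 < L := by positivity
  let E : ℝ → ℝ := fun t => Real.exp (L * (t - a))
  have hE : ∀ t, HasDerivAt E (L * E t) t := fun t => by
    simpa [E, mul_comm] using ((hasDerivAt_id t).sub_const a |>.const_mul L).exp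
  let P : ℝ → Prop := fun c => ∀ i, ∀ t ∈ Icc a b, w i t ≤ c * E t
  -- Comparing with `c / 2 * E`: the exponential rate `L` beats the Lipschitz constant `K`.
  have halve : ∀ c, 0 < c → P c → P (c / 2) := by
    intro c hc hP i
    refine image_le_of_hasDerivAt_lt_deriv_boundary (hw i) ?_
      (fun t => (hE t).const_mul (c / 2)) ?_
    · simpa [E] using (ha i).trans (by positivity)
    · intro t ⟨hat, htb⟩ htouch
      have hpos : 0 < w i t := htouch ▸ by positivity
      have hta : a < t := hat.lt_of_ne fun h => by rw [← h] at hpos; linarith [ha i]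
      obtain ⟨D, hD, hDK⟩ := hderiv i t ⟨hta, htb.le⟩ hpos (c * E t) fun j => hP j t ⟨hat, htb.le⟩
      refine ⟨D, hD, hDK.trans_lt ?_⟩
      have hcE : 0 < c * E t := by positivity
      nlinarith [le_max_left K 0]
  have base : P (max M 1) := fun i t ht =>
    calc w i t ≤ max M 1 := (hM i t ht).trans (le_max_left _ _)
      _ ≤ max M 1 * E t := le_mul_of_one_le_right (by positivity)
          (Real.one_le_exp (by nlinarith [ht.1]))
  have iterate : ∀ n : ℕ, P (max M 1 * (1 / 2) ^ n) := fun n => by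
    induction n with
    | zero => simpa using base
    | succ n ih =>
      rw [pow_succ, ← mul_assoc, mul_one_div]
      exact halve _ (by positivity) ih
  intro i t ht
  have hlim : Tendsto (fun n : ℕ => max M 1 * (1 / 2) ^ n * E t) atTop (𝓝 0) := by
    simpa using ((tendsto_pow_atTop_nhds_zero_of_lt_one (by norm_num)
      (by norm_num : (1 / 2 : ℝ) < 1)).const_mul (max M 1)).mul_const (E t)
  exact ge_of_tendsto' hlim fun n => iterate n i t ht

theorem IsKernel.integrable_s16 {J : ℝ → ℝ} (hJ : IsKernel J) : Integrable J :=
  Integrable.of_integral_ne_zero (by rw [hJ.2.2.2.2.2]; exact one_ne_zero)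

theorem IsKernel.integrable_mul {J f : ℝ → ℝ} {C : ℝ} (hJ : IsKernel J) (x : ℝ)
    (hf : Continuous f) (hfC : ∀ y, |f y| ≤ C) : Integrable fun y => J (x - y) * f y :=
  (hJ.integrable_s16.comp_sub_left x).mul_bdd hf.aestronglyMeasurable (ae_of_all _ hfC)

theorem IsKernel.integral_mul_sub_integral_mul_le {J f g : ℝ → ℝ} {c : ℝ} (hJ : IsKernel J)
    (x : ℝ) (hf : Integrable fun y => J (x - y) * f y) (hg : Integrable fun y => J (x - y) * g y)
    (hfg : ∀ y, f y - g y ≤ c) :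
    (∫ y, J (x - y) * f y) - ∫ y, J (x - y) * g y ≤ c :=
  calc (∫ y, J (x - y) * f y) - ∫ y, J (x - y) * g y
      = ∫ y, J (x - y) * (f y - g y) := by rw [← integral_sub hf hg]; simp only [mul_sub]
    _ ≤ ∫ y, J (x - y) * c :=
        integral_mono ((hf.sub hg).congr (ae_of_all _ fun y => (mul_sub _ _ _).symm))
          ((hJ.integrable_s16.comp_sub_left x).mul_const c)
          fun y => mul_le_mul_of_nonneg_left (hfg y) (hJ.2.2.2.1 _)
    _ = c := by rw [integral_mul_const, integral_sub_left_eq_self, hJ.2.2.2.2.2, one_mul]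

/-- `p > P` is the species compared from above and `q`, `Q` its competitor, compared the other
way round; both halves of the comparison, `(u, ū, v, v̲)` and `(v̲, v, ū, u)`, have this shape. -/
theorem nonlocal_competition_sub_le {d γ a C c I I' p P q Q : ℝ} (hd : 0 ≤ d) (hγ : 0 ≤ γ)
    (ha : 0 ≤ a) (hP : 0 ≤ P) (hPC : P ≤ C) (hq : 0 ≤ q) (hpP : P < p) (hpc : p - P ≤ c)
    (hQc : Q - q ≤ c) (hI : I - I' ≤ c) :
    d * (I - p) + γ * p * (1 - p - a * q) - (d * (I' - P) + γ * P * (1 - P - a * Q))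
      ≤ (d + γ + γ * a * C) * c := by
  have hc : 0 ≤ c := (sub_pos.2 hpP).le.trans hpc
  have hdiff : d * (I - I') ≤ d * c := mul_le_mul_of_nonneg_left hI hd
  have hself : 0 ≤ γ * (p - P) * (p + P + a * q) :=
    mul_nonneg (mul_nonneg hγ (sub_pos.2 hpP).le) (by nlinarith [mul_nonneg ha hq])
  have hcross : γ * a * P * (Q - q) ≤ γ * a * C * c := by
    have hγa : 0 ≤ γ * a := mul_nonneg hγ ha
    calc γ * a * P * (Q - q) ≤ γ * a * P * c := mul_le_mul_of_nonneg_left hQc (by positivity)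
      _ ≤ γ * a * C * c := by gcongr
  linarith [mul_le_mul_of_nonneg_left hpc hγ, mul_nonneg hd (sub_pos.2 hpP).le]

namespace IsSolution

variable {d₁ d₂ hc k γ μ h₀ : ℝ} {J₁ J₂ u₀ v₀ : ℝ → ℝ} {u v : ℝ → ℝ → ℝ} {g h : ℝ → ℝ}

theorem intervalIntegral_eq_integral (hsol : IsSolution d₁ d₂ hc k γ μ h₀ J₁ J₂ u₀ v₀ u v g h)
    {t : ℝ} (ht : 0 ≤ t) (x : ℝ) :
    ∫ y in g t..h t, J₁ (x - y) * u t y = ∫ y, J₁ (x - y) * u t y := by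
  refine intervalIntegral.integral_eq_integral_of_support_subset fun y hy => ?_
  by_contra hy'
  exact hy (by simp only [hsol.u_outside t ht y fun hyI => hy' (Ioo_subset_Ioc_self hyI), mul_zero])

theorem exists_hasDerivAt_sub_upper_le
    (hsol : IsSolution d₁ d₂ hc k γ μ h₀ J₁ J₂ u₀ v₀ u v g h) (hd₁ : 0 ≤ d₁) (hk : 0 ≤ k)
    (hJ₁ : IsKernel J₁) {ub vl : ℝ → ℝ → ℝ} {r x c Cub : ℝ} (hr : 0 < r)
    (hub_int : Integrable fun y => J₁ (x - y) * ub r y) (hub_nonneg : 0 ≤ ub r x)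
    (hub_le : ub r x ≤ Cub)
    (hub_eq : ∃ D, HasDerivAt (fun s => ub s x) D r ∧
      d₁ * (∫ y, J₁ (x - y) * ub r y) - d₁ * ub r x + ub r x * (1 - ub r x - k * vl r x) ≤ D)
    (hpos : ub r x < u r x) (hcu : ∀ y, u r y - ub r y ≤ c) (hcv : vl r x - v r x ≤ c) :
    ∃ D, HasDerivAt (fun s => u s x - ub s x) D r ∧ D ≤ (d₁ + 1 + k * Cub) * c := by
  obtain ⟨Dub, hDub, hDub_le⟩ := hub_eq
  have hx : x ∈ Ioo (g r) (h r) := by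
    by_contra hx
    linarith [hsol.u_outside r hr.le x hx]
  refine ⟨_, (hsol.u_eq r hr x hx.1 hx.2).sub hDub, ?_⟩
  obtain ⟨Cu, hCu⟩ := hsol.u_bdd
  have hu_int : Integrable fun y => J₁ (x - y) * u r y :=
    hJ₁.integrable_mul x (hsol.u_cont.uncurry_left r)
      fun y => (abs_of_nonneg (hsol.u_nonneg r y)).trans_le (hCu r y)
  have := nonlocal_competition_sub_le (γ := 1) hd₁ zero_le_one hk hub_nonneg hub_le
    (hsol.v_nonneg r x) hpos (hcu x) hcv (hJ₁.integral_mul_sub_integral_mul_le x hu_int hub_int hcu)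
  rw [hsol.intervalIntegral_eq_integral hr.le]
  linarith

theorem exists_hasDerivAt_lower_sub_le
    (hsol : IsSolution d₁ d₂ hc k γ μ h₀ J₁ J₂ u₀ v₀ u v g h) (hd₂ : 0 ≤ d₂) (hγ : 0 ≤ γ)
    (hhc : 0 ≤ hc) (hJ₂ : IsKernel J₂) {ub vl : ℝ → ℝ → ℝ} {r x c Cv : ℝ} (hr : 0 < r)
    (hv_le : v r x ≤ Cv) (hvl_int : Integrable fun y => J₂ (x - y) * vl r y)
    (hub_nonneg : 0 ≤ ub r x)
    (hvl_eq : ∃ D, HasDerivAt (fun s => vl s x) D r ∧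
      D ≤ d₂ * (∫ y, J₂ (x - y) * vl r y) - d₂ * vl r x
        + γ * vl r x * (1 - vl r x - hc * ub r x))
    (hpos : v r x < vl r x) (hcu : u r x - ub r x ≤ c) (hcv : ∀ y, vl r y - v r y ≤ c) :
    ∃ D, HasDerivAt (fun s => vl s x - v s x) D r ∧ D ≤ (d₂ + γ + γ * hc * Cv) * c := by
  obtain ⟨Dvl, hDvl, hDvl_le⟩ := hvl_eq
  refine ⟨_, hDvl.sub (hsol.v_eq r hr x), ?_⟩
  obtain ⟨Cv', hCv'⟩ := hsol.v_bdd
  have hv_int : Integrable fun y => J₂ (x - y) * v r y :=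
    hJ₂.integrable_mul x (hsol.v_cont.uncurry_left r)
      fun y => (abs_of_nonneg (hsol.v_nonneg r y)).trans_le (hCv' r y)
  have := nonlocal_competition_sub_le hd₂ hγ hhc (hsol.v_nonneg r x) hv_le hub_nonneg hpos
    (hcv x) hcu (hJ₂.integral_mul_sub_integral_mul_le x hvl_int hv_int hcv)
  linarith

end IsSolution

theorem comparison_with_cauchy_problem_general
    (d₁ d₂ hc k γ μ h₀ : ℝ) (J₁ J₂ u₀ v₀ : ℝ → ℝ)
    (u v : ℝ → ℝ → ℝ) (g h : ℝ → ℝ)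
    (hd₁ : 0 < d₁) (hd₂ : 0 < d₂) (hhc : 0 < hc) (hkpos : 0 < k) (hγ : 0 < γ)
    (hJ₁ : IsKernel J₁) (hJ₂ : IsKernel J₂)
    (hsol : IsSolution d₁ d₂ hc k γ μ h₀ J₁ J₂ u₀ v₀ u v g h)
    (T : ℝ) (ub vl : ℝ → ℝ → ℝ)
    (hub_nonneg : ∀ t ∈ Set.Icc 0 T, ∀ x : ℝ, 0 ≤ ub t x)
    (hvl_nonneg : ∀ t ∈ Set.Icc 0 T, ∀ x : ℝ, 0 ≤ vl t x)
    (hub_bdd : ∃ C, ∀ t x, ub t x ≤ C) (hvl_bdd : ∃ C, ∀ t x, vl t x ≤ C)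
    (hub_cont : ContinuousOn (fun p : ℝ × ℝ => ub p.1 p.2) (Set.Icc 0 T ×ˢ Set.univ))
    (hvl_cont : ContinuousOn (fun p : ℝ × ℝ => vl p.1 p.2) (Set.Icc 0 T ×ˢ Set.univ))
    (hub_eq : ∀ t ∈ Set.Ioc 0 T, ∀ x : ℝ,
      ∃ D, HasDerivAt (fun s => ub s x) D t ∧
        d₁ * (∫ y, J₁ (x - y) * ub t y) - d₁ * ub t x
          + ub t x * (1 - ub t x - k * vl t x) ≤ D)
    (hvl_eq : ∀ t ∈ Set.Ioc 0 T, ∀ x : ℝ,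
      ∃ D, HasDerivAt (fun s => vl s x) D t ∧
        D ≤ d₂ * (∫ y, J₂ (x - y) * vl t y) - d₂ * vl t x
          + γ * vl t x * (1 - vl t x - hc * ub t x))
    (hub_init : ∀ x : ℝ, u₀ x ≤ ub 0 x)
    (hvl_init : ∀ x : ℝ, 0 ≤ vl 0 x ∧ vl 0 x ≤ v₀ x) :
    ∀ t ∈ Set.Icc 0 T, ∀ x : ℝ, u t x ≤ ub t x ∧ vl t x ≤ v t x := by
  obtain ⟨Cu, hCu⟩ := hsol.u_bdd
  obtain ⟨Cv, hCv⟩ := hsol.v_bdd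
  obtain ⟨Cub, hCub⟩ := hub_bdd
  obtain ⟨Cvl, hCvl⟩ := hvl_bdd
  have hub_int : ∀ t ∈ Icc 0 T, ∀ x, Integrable fun y => J₁ (x - y) * ub t y := fun t ht x =>
    hJ₁.integrable_mul x (continuousOn_univ.1 (hub_cont.uncurry_left (f := ub) t ht))
      fun y => (abs_of_nonneg (hub_nonneg t ht y)).trans_le (hCub t y)
  have hvl_int : ∀ t ∈ Icc 0 T, ∀ x, Integrable fun y => J₂ (x - y) * vl t y := fun t ht x =>
    hJ₂.integrable_mul x (continuousOn_univ.1 (hvl_cont.uncurry_left (f := vl) t ht))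
      fun y => (abs_of_nonneg (hvl_nonneg t ht y)).trans_le (hCvl t y)
  have key := nonpos_of_hasDerivAt_le_mul_upperBound (a := 0) (b := T) (M := max Cu Cvl)
    (K := max (d₁ + 1 + k * Cub) (d₂ + γ + γ * hc * Cv))
    (w := Sum.elim (fun x t => u t x - ub t x) fun x t => vl t x - v t x) ?cont ?init ?bound ?deriv
  · exact fun t ht x => ⟨sub_nonpos.1 (key (.inl x) t ht), sub_nonpos.1 (key (.inr x) t ht)⟩
  case cont =>
    rintro (x | x)
    · exact (hsol.u_cont.uncurry_right x).continuousOn.sub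
        (hub_cont.uncurry_right (f := ub) x (mem_univ x))
    · exact (hvl_cont.uncurry_right (f := vl) x (mem_univ x)).sub
        (hsol.v_cont.uncurry_right x).continuousOn
  case init =>
    rintro (x | x)
    · simpa [hsol.u_init] using hub_init x
    · simpa [hsol.v_init] using (hvl_init x).2
  case bound =>
    rintro (x | x) t ht
    · exact (sub_le_self _ (hub_nonneg t ht x)).trans ((hCu t x).trans (le_max_left _ _))
    · exact (sub_le_self _ (hsol.v_nonneg t x)).trans ((hCvl t x).trans (le_max_right _ _))
  case deriv =>
    rintro (x | x) t ht hpos c hwc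
    all_goals
      have ht' := Ioc_subset_Icc_self ht
      have hc0 : 0 ≤ c := hpos.le.trans (hwc _)
    · obtain ⟨D, hD, hDc⟩ := hsol.exists_hasDerivAt_sub_upper_le hd₁.le hkpos.le hJ₁ ht.1
        (hub_int t ht' x) (hub_nonneg t ht' x) (hCub t x) (hub_eq t ht x) (sub_pos.1 hpos)
        (fun y => hwc (.inl y)) (hwc (.inr x))
      exact ⟨D, hD, hDc.trans (mul_le_mul_of_nonneg_right (le_max_left _ _) hc0)⟩
    · obtain ⟨D, hD, hDc⟩ := hsol.exists_hasDerivAt_lower_sub_le hd₂.le hγ.le hhc.le hJ₂ ht.1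
        (hCv t x) (hvl_int t ht' x) (hub_nonneg t ht' x) (hvl_eq t ht x) (sub_pos.1 hpos)
        (hwc (.inl x)) (fun y => hwc (.inr y))
      exact ⟨D, hD, hDc.trans (mul_le_mul_of_nonneg_right (le_max_right _ _) hc0)⟩

/-- Lemma 5.2 (iii): comparison with the Cauchy problem. If
`(ū, v̲)` is an upper/lower solution pair of the Cauchy problem of the competition
system on `[0, T] × ℝ`, ordered with `(u₀, v₀)` at `t = 0`, then
`u ≤ ū` and `v ≥ v̲` on `[0, T] × ℝ`. -/
theorem comparison_with_cauchy_problem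
    (d₁ d₂ hc k γ μ h₀ : ℝ) (J₁ J₂ u₀ v₀ : ℝ → ℝ)
    (u v : ℝ → ℝ → ℝ) (g h : ℝ → ℝ)
    (hd₁ : 0 < d₁) (hd₂ : 0 < d₂) (hhc : 0 < hc) (hkpos : 0 < k) (hγ : 0 < γ)
    (hμ : 0 < μ)
    (hJ₁ : IsKernel J₁) (hJ₂ : IsKernel J₂)
    (hinit : AdmissibleInit h₀ u₀ v₀)
    (hsol : IsSolution d₁ d₂ hc k γ μ h₀ J₁ J₂ u₀ v₀ u v g h)
    (T : ℝ) (hT : 0 < T) (ub vl : ℝ → ℝ → ℝ)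
    (hub_nonneg : ∀ t ∈ Set.Icc 0 T, ∀ x : ℝ, 0 ≤ ub t x)
    (hvl_nonneg : ∀ t ∈ Set.Icc 0 T, ∀ x : ℝ, 0 ≤ vl t x)
    (hub_bdd : ∃ C, ∀ t x, ub t x ≤ C) (hvl_bdd : ∃ C, ∀ t x, vl t x ≤ C)
    (hub_cont : ContinuousOn (fun p : ℝ × ℝ => ub p.1 p.2) (Set.Icc 0 T ×ˢ Set.univ))
    (hvl_cont : ContinuousOn (fun p : ℝ × ℝ => vl p.1 p.2) (Set.Icc 0 T ×ˢ Set.univ))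
    (hub_eq : ∀ t ∈ Set.Ioc 0 T, ∀ x : ℝ,
      ∃ D, HasDerivAt (fun s => ub s x) D t ∧
        d₁ * (∫ y, J₁ (x - y) * ub t y) - d₁ * ub t x
          + ub t x * (1 - ub t x - k * vl t x) ≤ D)
    (hvl_eq : ∀ t ∈ Set.Ioc 0 T, ∀ x : ℝ,
      ∃ D, HasDerivAt (fun s => vl s x) D t ∧
        D ≤ d₂ * (∫ y, J₂ (x - y) * vl t y) - d₂ * vl t x
          + γ * vl t x * (1 - vl t x - hc * ub t x))
    (hub_init : ∀ x : ℝ, u₀ x ≤ ub 0 x)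
    (hvl_init : ∀ x : ℝ, 0 ≤ vl 0 x ∧ vl 0 x ≤ v₀ x) :
    ∀ t ∈ Set.Icc 0 T, ∀ x : ℝ, u t x ≤ ub t x ∧ vl t x ≤ v t x :=
  comparison_with_cauchy_problem_general d₁ d₂ hc k γ μ h₀ J₁ J₂ u₀ v₀ u v g h hd₁ hd₂ hhc hkpos hγ
    hJ₁ hJ₂ hsol T ub vl hub_nonneg hvl_nonneg hub_bdd hvl_bdd hub_cont hvl_cont hub_eq hvl_eq
    hub_init hvl_init
end
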